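/- Let n ≥ 2. The set of smooth compactly supported functions vanishing on a neighborhood of the origin is dense, with respect to the H¹-norm, in the set of all smooth compactly supported functions on ℝⁿ. Precisely: for every smooth compactly supported u : ℝⁿ → ℂ and every δ > 0 there exists a smooth compactly supported v : ℝⁿ → ℂ vanishing on some open neighborhood of 0 such that (∫_{ℝⁿ} |u − v|² dx)^{1/2} + (∫_{ℝⁿ} ‖D u − D v‖² dx)^{1/2} < δ, where D denotes the (Fréchet) derivative and ‖·‖ its operator norm, and dx is Lebesgue measure on ℝⁿ. -/

import Mathlib

/-!
Multiply `u` by the logarithmic cutoff `ψ_T(x) = θ(2 + log ‖x‖ / T)`, where `θ` is a smooth step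
from `0` on `(-∞, 0]` to `1` on `[1, ∞)`. It vanishes for `‖x‖ ≤ e^{-2T}`, equals `1` for
`‖x‖ ≥ e^{-T}`, and `‖Dψ_T(x)‖ ≤ M / (T ‖x‖)` in between. In polar coordinates, in dimension
`n ≥ 2`, `∫_{e^{-2T}}^{e^{-T}} r^{n-1} r^{-2} dr ≤ ∫_{e^{-2T}}^{e^{-T}} r^{-1} dr = T`, so
`‖Dψ_T‖²_{L²} = O(1/T)`. Since `u - ψ_T u` and `(1 - ψ_T) Du` are bounded and supported in the
ball of radius `e^{-T}`, and `D(ψ_T u) = ψ_T Du + u Dψ_T`, the function `ψ_T u` tends to `u` in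
`H¹` as `T → ∞`.
-/

open MeasureTheory Metric Set Filter Topology Module Real

namespace Real.smoothTransition

theorem exists_norm_deriv_le : ∃ M, ∀ t, ‖deriv smoothTransition t‖ ≤ M := by
  have hsupp : HasCompactSupport (deriv smoothTransition) := by
    refine HasCompactSupport.intro (isCompact_Icc (a := 0) (b := 1)) fun t ht => ?_
    rcases not_and_or.1 ht with ht | ht
    · have : smoothTransition =ᶠ[𝓝 t] fun _ => 0 :=
        eventually_of_mem (Iio_mem_nhds (not_le.1 ht)) fun s hs => zero_of_nonpos (le_of_lt hs)
      simp [this.deriv_eq]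
    · have : smoothTransition =ᶠ[𝓝 t] fun _ => 1 :=
        eventually_of_mem (Ioi_mem_nhds (not_le.1 ht)) fun s hs => one_of_one_le (le_of_lt hs)
      simp [this.deriv_eq]
  exact hsupp.exists_bound_of_continuous (smoothTransition.contDiff.continuous_deriv le_rfl)

end Real.smoothTransition

section LogCutoff

variable {E : Type*} [NormedAddCommGroup E]

theorem norm_fderiv_comp_norm_le [InnerProductSpace ℝ E] {g : ℝ → ℝ} {x : E} (hx : x ≠ 0)
    (hg : DifferentiableAt ℝ g ‖x‖) : ‖fderiv ℝ (fun y => g ‖y‖) x‖ ≤ ‖deriv g ‖x‖‖ := by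
  have hnorm : DifferentiableAt ℝ (‖·‖) x := (contDiffAt_norm ℝ hx).differentiableAt one_ne_zero
  have h : HasFDerivAt (fun y => g ‖y‖) (deriv g ‖x‖ • fderiv ℝ (‖·‖) x) x :=
    hg.hasDerivAt.comp_hasFDerivAt x hnorm.hasFDerivAt
  rw [h.fderiv, norm_smul]
  exact mul_le_of_le_one_right (norm_nonneg _) <| by
    simpa using norm_fderiv_le_of_lipschitz ℝ (x₀ := x) lipschitzWith_one_norm

open Classical in
/-- The origin is treated separately because `Real.log 0 = 0`. -/
noncomputable def logCutoff (T : ℝ) (x : E) : ℝ :=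
  if x = 0 then 0 else smoothTransition (2 + log ‖x‖ / T)

variable {T : ℝ}

theorem logCutoff_mem_Icc (T : ℝ) (x : E) : logCutoff T x ∈ Icc 0 1 := by
  unfold logCutoff
  split_ifs
  · exact ⟨le_rfl, zero_le_one⟩
  · exact ⟨smoothTransition.nonneg _, smoothTransition.le_one _⟩

theorem logCutoff_eq_zero (hT : 0 < T) {x : E} (hx : ‖x‖ ≤ exp (-2 * T)) :
    logCutoff T x = 0 := by
  unfold logCutoff
  split_ifs with hx0
  · rfl
  · have hlog : log ‖x‖ ≤ -2 * T := by simpa using log_le_log (norm_pos_iff.2 hx0) hx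
    have : log ‖x‖ / T ≤ -2 := by rw [div_le_iff₀ hT]; linarith
    exact smoothTransition.zero_of_nonpos (by linarith)

theorem logCutoff_eq_one (hT : 0 < T) {x : E} (hx : exp (-T) ≤ ‖x‖) : logCutoff T x = 1 := by
  have hx0 : x ≠ 0 := by rintro rfl; exact (exp_pos _).not_ge (by simpa using hx)
  have hlog : -T ≤ log ‖x‖ := by simpa using log_le_log (exp_pos _) hx
  have : -1 ≤ log ‖x‖ / T := by rw [le_div_iff₀ hT]; linarith
  rw [logCutoff, if_neg hx0]
  exact smoothTransition.one_of_one_le (by linarith)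

theorem logCutoff_eventuallyEq {x : E} (hx : x ≠ 0) :
    logCutoff T =ᶠ[𝓝 x] fun y => smoothTransition (2 + log ‖y‖ / T) :=
  eventually_of_mem (isOpen_compl_singleton.mem_nhds hx) fun _ hy => if_neg hy

theorem logCutoff_eventuallyEq_zero (hT : 0 < T) {x : E} (hx : ‖x‖ < exp (-2 * T)) :
    logCutoff T =ᶠ[𝓝 x] fun _ => 0 :=
  eventually_of_mem ((isOpen_lt continuous_norm continuous_const).mem_nhds hx) fun _ hy =>
    logCutoff_eq_zero hT (le_of_lt hy)

theorem logCutoff_eventuallyEq_one (hT : 0 < T) {x : E} (hx : exp (-T) < ‖x‖) :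
    logCutoff T =ᶠ[𝓝 x] fun _ => 1 :=
  eventually_of_mem ((isOpen_lt continuous_const continuous_norm).mem_nhds hx) fun _ hy =>
    logCutoff_eq_one hT (le_of_lt hy)

variable [InnerProductSpace ℝ E]

theorem contDiff_logCutoff (hT : 0 < T) : ContDiff ℝ (⊤ : ℕ∞) (logCutoff (E := E) T) := by
  refine contDiff_iff_contDiffAt.2 fun x => ?_
  by_cases hx : ‖x‖ < exp (-2 * T)
  · exact contDiffAt_const.congr_of_eventuallyEq (logCutoff_eventuallyEq_zero hT hx)
  have hx0 : x ≠ 0 := fun h => hx (by simp [h, exp_pos])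
  refine ContDiffAt.congr_of_eventuallyEq ?_ (logCutoff_eventuallyEq hx0)
  exact smoothTransition.contDiffAt.comp x <| contDiffAt_const.add <|
    ((contDiffAt_log.2 (norm_ne_zero_iff.2 hx0)).comp x (contDiffAt_norm ℝ hx0)).div_const T

theorem fderiv_logCutoff_eq_zero (hT : 0 < T) {x : E}
    (hx : ‖x‖ ∉ Icc (exp (-2 * T)) (exp (-T))) : fderiv ℝ (logCutoff T) x = 0 := by
  rcases not_and_or.1 hx with hx | hx
  · simp [(logCutoff_eventuallyEq_zero hT (not_le.1 hx)).fderiv_eq]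
  · simp [(logCutoff_eventuallyEq_one hT (not_le.1 hx)).fderiv_eq]

theorem hasCompactSupport_fderiv_logCutoff [FiniteDimensional ℝ E] (hT : 0 < T) :
    HasCompactSupport (fderiv ℝ (logCutoff (E := E) T)) :=
  HasCompactSupport.intro (isCompact_closedBall 0 (exp (-T))) fun _ hx =>
    fderiv_logCutoff_eq_zero hT fun h => hx (mem_closedBall_zero_iff.2 h.2)

theorem norm_fderiv_logCutoff_le (hT : 0 < T) {M : ℝ}
    (hM : ∀ t, ‖deriv smoothTransition t‖ ≤ M) {x : E}
    (hx : ‖x‖ ∈ Icc (exp (-2 * T)) (exp (-T))) : ‖fderiv ℝ (logCutoff T) x‖ ≤ M / (T * ‖x‖) := by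
  have hx0 : 0 < ‖x‖ := (exp_pos _).trans_le hx.1
  have hg : HasDerivAt (fun r => smoothTransition (2 + log r / T))
      (deriv smoothTransition (2 + log ‖x‖ / T) * (‖x‖⁻¹ / T)) ‖x‖ :=
    ((smoothTransition.contDiff (n := 1)).differentiable one_ne_zero _).hasDerivAt.comp _
      (((hasDerivAt_log hx0.ne').div_const T).const_add 2)
  rw [(logCutoff_eventuallyEq (norm_pos_iff.1 hx0)).fderiv_eq]
  calc _ ≤ ‖deriv (fun r => smoothTransition (2 + log r / T)) ‖x‖‖ :=
        norm_fderiv_comp_norm_le (norm_pos_iff.1 hx0) hg.differentiableAt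
    _ = ‖deriv smoothTransition (2 + log ‖x‖ / T)‖ * (‖x‖⁻¹ / T) := by
        rw [hg.deriv, norm_mul, Real.norm_of_nonneg (div_nonneg (inv_nonneg.2 hx0.le) hT.le)]
    _ ≤ M * (‖x‖⁻¹ / T) := by gcongr; exact hM _
    _ = M / (T * ‖x‖) := by field_simp

end LogCutoff

section Radial

variable {E : Type*} [NormedAddCommGroup E] [NormedSpace ℝ E] [FiniteDimensional ℝ E]
  [MeasurableSpace E] [BorelSpace E] (μ : Measure E) [μ.IsAddHaarMeasure]

theorem integrable_indicator_Icc_inv_sq_norm {r R : ℝ} (hr : 0 < r) :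
    Integrable (fun x : E => (Icc r R).indicator (fun s => (s ^ 2)⁻¹) ‖x‖) μ := by
  have hK : IsCompact ((‖·‖) ⁻¹' Icc r R : Set E) :=
    (isCompact_closedBall (0 : E) R).of_isClosed_subset
      (isClosed_Icc.preimage continuous_norm) fun x hx => by simpa using hx.2
  have hcont : ContinuousOn (fun x : E => (‖x‖ ^ 2)⁻¹) ((‖·‖) ⁻¹' Icc r R) :=
    (continuous_norm.pow 2).continuousOn.inv₀ fun x hx => (pow_pos (hr.trans_le hx.1) 2).ne'
  refine ((hcont.integrableOn_compact hK).integrable_indicator hK.isClosed.measurableSet).congr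
    (ae_of_all _ fun x => ?_)
  simp [indicator]

theorem integral_indicator_Icc_inv_sq_norm_le (hE : 2 ≤ finrank ℝ E) {r R : ℝ} (hr : 0 < r)
    (hrR : r ≤ R) (hR : R ≤ 1) :
    ∫ x, (Icc r R).indicator (fun s => (s ^ 2)⁻¹) ‖x‖ ∂μ
      ≤ finrank ℝ E * μ.real (ball 0 1) * log (R / r) := by
  have : Nontrivial E := Module.nontrivial_of_finrank_pos (R := ℝ) (by omega)
  have hradial : ∀ y ∈ Ioi (0 : ℝ),
      y ^ (finrank ℝ E - 1) • (Icc r R).indicator (fun s => (s ^ 2)⁻¹) y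
        ≤ (Icc r R).indicator (fun s => s⁻¹) y := by
    intro y hy
    by_cases hyI : y ∈ Icc r R
    · have hpow : y ^ (finrank ℝ E - 1) ≤ y :=
        pow_le_of_le_one (le_of_lt hy) (hyI.2.trans hR) (by omega)
      rw [indicator_of_mem hyI, indicator_of_mem hyI, smul_eq_mul, ← div_eq_mul_inv]
      calc y ^ (finrank ℝ E - 1) / y ^ 2 ≤ y / y ^ 2 := by gcongr
        _ = y⁻¹ := by field_simp
    · simp [indicator_of_notMem hyI]
  have hint : IntegrableOn ((Icc r R).indicator fun s : ℝ => s⁻¹) (Ioi 0) :=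
    ((continuousOn_inv₀.mono fun y hy => (hr.trans_le hy.1).ne').integrableOn_Icc
      |>.integrable_indicator measurableSet_Icc).integrableOn
  have hIcc : Ioi (0 : ℝ) ∩ Icc r R = Icc r R := inter_eq_right.2 fun y hy => hr.trans_le hy.1
  calc ∫ x, (Icc r R).indicator (fun s => (s ^ 2)⁻¹) ‖x‖ ∂μ
      = finrank ℝ E * (μ.real (ball 0 1) * ∫ y in Ioi (0 : ℝ),
          y ^ (finrank ℝ E - 1) • (Icc r R).indicator (fun s => (s ^ 2)⁻¹) y) := by
        rw [integral_fun_norm_addHaar μ, nsmul_eq_mul, smul_eq_mul]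
    _ ≤ finrank ℝ E * (μ.real (ball 0 1) *
          ∫ y in Ioi (0 : ℝ), (Icc r R).indicator (fun s => s⁻¹) y) := by
        refine mul_le_mul_of_nonneg_left (mul_le_mul_of_nonneg_left ?_ measureReal_nonneg)
          (Nat.cast_nonneg _)
        refine integral_mono_of_nonneg (ae_restrict_of_forall_mem measurableSet_Ioi fun y hy => ?_)
          hint (ae_restrict_of_forall_mem measurableSet_Ioi hradial)
        exact smul_nonneg (pow_nonneg (le_of_lt hy) _)
          (indicator_nonneg (fun s _ => by positivity) y)
    _ = finrank ℝ E * μ.real (ball 0 1) * log (R / r) := by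
        rw [setIntegral_indicator measurableSet_Icc, hIcc, integral_Icc_eq_integral_Ioc,
          ← intervalIntegral.integral_of_le hrR, integral_inv_of_pos hr (hr.trans_le hrR),
          mul_assoc]

end Radial

section Cutoff

variable {X F : Type*} [NormedAddCommGroup F] [NormedSpace ℝ F] {ψ : X → ℝ} {s : Set X}

theorem norm_one_sub_smul_sq_le_indicator {G : Type*} [NormedAddCommGroup G] [NormedSpace ℝ G]
    (hψ : ∀ x, ψ x ∈ Icc 0 1) (hψs : ∀ x ∉ s, ψ x = 1)
    {w : X → G} {C : ℝ} (hw : ∀ x, ‖w x‖ ≤ C) (x : X) :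
    ‖(1 - ψ x) • w x‖ ^ 2 ≤ s.indicator (fun _ => C ^ 2) x := by
  by_cases hx : x ∈ s
  · have h1 : |1 - ψ x| ≤ 1 := abs_le.2 ⟨by linarith [(hψ x).2], by linarith [(hψ x).1]⟩
    rw [indicator_of_mem hx, norm_smul, Real.norm_eq_abs]
    exact pow_le_pow_left₀ (by positivity)
      ((mul_le_mul h1 (hw x) (norm_nonneg _) zero_le_one).trans_eq (one_mul C)) 2
  · simp [indicator_of_notMem hx, hψs x hx]

theorem integral_norm_sub_smul_sq_le [MeasurableSpace X] {μ : Measure X} {u : X → F} {Cu : ℝ}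
    (hψ : ∀ x, ψ x ∈ Icc 0 1) (hψs : ∀ x ∉ s, ψ x = 1)
    (hs : MeasurableSet s) (hμs : μ s ≠ ⊤) (hu : ∀ x, ‖u x‖ ≤ Cu) :
    ∫ x, ‖u x - ψ x • u x‖ ^ 2 ∂μ ≤ μ.real s * Cu ^ 2 := by
  have hpt (x : X) : ‖u x - ψ x • u x‖ ^ 2 ≤ s.indicator (fun _ => Cu ^ 2) x := by
    rw [show u x - ψ x • u x = (1 - ψ x) • u x by rw [sub_smul, one_smul]]
    exact norm_one_sub_smul_sq_le_indicator hψ hψs hu x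
  calc _ ≤ ∫ x, s.indicator (fun _ => Cu ^ 2) x ∂μ :=
        integral_mono_of_nonneg (ae_of_all _ fun _ => by positivity)
          ((integrable_indicator_iff hs).2 (integrableOn_const hμs)) (ae_of_all _ hpt)
    _ = μ.real s * Cu ^ 2 := integral_indicator_const _ hs

theorem integral_norm_fderiv_sub_fderiv_smul_sq_le [NormedAddCommGroup X] [NormedSpace ℝ X]
    [MeasurableSpace X] {μ : Measure X} {u : X → F} {Cu : ℝ} (hψ : ∀ x, ψ x ∈ Icc 0 1)
    (hψs : ∀ x ∉ s, ψ x = 1) (hs : MeasurableSet s) (hμs : μ s ≠ ⊤) (hu : ∀ x, ‖u x‖ ≤ Cu)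
    (hψd : Differentiable ℝ ψ) (hud : Differentiable ℝ u) {Cd : ℝ} (hDu : ∀ x, ‖fderiv ℝ u x‖ ≤ Cd)
    (hDψ : Integrable (fun x => ‖fderiv ℝ ψ x‖ ^ 2) μ) :
    ∫ x, ‖fderiv ℝ u x - fderiv ℝ (fun y => ψ y • u y) x‖ ^ 2 ∂μ
      ≤ 2 * (μ.real s * Cd ^ 2) + 2 * Cu ^ 2 * ∫ x, ‖fderiv ℝ ψ x‖ ^ 2 ∂μ := by
  have hpt (x : X) : ‖fderiv ℝ u x - fderiv ℝ (fun y => ψ y • u y) x‖ ^ 2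
      ≤ 2 * s.indicator (fun _ => Cd ^ 2) x + 2 * Cu ^ 2 * ‖fderiv ℝ ψ x‖ ^ 2 := by
    have hD : fderiv ℝ u x - fderiv ℝ (fun y => ψ y • u y) x
        = (1 - ψ x) • fderiv ℝ u x - (fderiv ℝ ψ x).smulRight (u x) := by
      rw [fderiv_fun_smul (hψd x) (hud x)]
      module
    have hsmulRight : ‖(fderiv ℝ ψ x).smulRight (u x)‖ ≤ Cu * ‖fderiv ℝ ψ x‖ := by
      rw [ContinuousLinearMap.norm_smulRight_apply, mul_comm]
      exact mul_le_mul_of_nonneg_right (hu x) (norm_nonneg _)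
    calc _ ≤ (‖(1 - ψ x) • fderiv ℝ u x‖ + ‖(fderiv ℝ ψ x).smulRight (u x)‖) ^ 2 := by
          rw [hD]; gcongr; exact norm_sub_le _ _
      _ ≤ 2 * (‖(1 - ψ x) • fderiv ℝ u x‖ ^ 2 + ‖(fderiv ℝ ψ x).smulRight (u x)‖ ^ 2) := add_sq_le
      _ ≤ 2 * (s.indicator (fun _ => Cd ^ 2) x + (Cu * ‖fderiv ℝ ψ x‖) ^ 2) := by
          gcongr
          exact norm_one_sub_smul_sq_le_indicator hψ hψs hDu x
      _ = _ := by ring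
  have hind : Integrable (s.indicator fun _ => Cd ^ 2) μ :=
    (integrable_indicator_iff hs).2 (integrableOn_const hμs)
  calc _ ≤ ∫ x, (2 * s.indicator (fun _ => Cd ^ 2) x + 2 * Cu ^ 2 * ‖fderiv ℝ ψ x‖ ^ 2) ∂μ :=
        integral_mono_of_nonneg (ae_of_all _ fun _ => by positivity)
          ((hind.const_mul 2).add (hDψ.const_mul _)) (ae_of_all _ hpt)
    _ = _ := by
        rw [integral_add (hind.const_mul 2) (hDψ.const_mul _), integral_const_mul,
          integral_const_mul, integral_indicator_const _ hs, smul_eq_mul]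

end Cutoff

section Capacity

variable {E : Type*} [NormedAddCommGroup E] [InnerProductSpace ℝ E] [FiniteDimensional ℝ E]
  [MeasurableSpace E] [BorelSpace E] (μ : Measure E) [μ.IsAddHaarMeasure] {T : ℝ}

theorem integrable_norm_fderiv_logCutoff_sq (hT : 0 < T) :
    Integrable (fun x => ‖fderiv ℝ (logCutoff T) x‖ ^ 2) μ := by
  have hcont : Continuous (fderiv ℝ (logCutoff (E := E) T)) :=
    (contDiff_logCutoff hT).continuous_fderiv (by simp)
  have hsupp : HasCompactSupport (fun x => ‖fderiv ℝ (logCutoff (E := E) T) x‖ ^ 2) :=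
    (hasCompactSupport_fderiv_logCutoff hT).comp_left (g := fun z => ‖z‖ ^ 2) (by simp)
  exact Continuous.integrable_of_hasCompactSupport (hcont.norm.pow 2) hsupp

theorem integral_norm_fderiv_logCutoff_sq_le (hE : 2 ≤ finrank ℝ E) (hT : 0 < T) {M : ℝ}
    (hM : ∀ t, ‖deriv smoothTransition t‖ ≤ M) :
    ∫ x, ‖fderiv ℝ (logCutoff T) x‖ ^ 2 ∂μ ≤ finrank ℝ E * μ.real (ball 0 1) * M ^ 2 / T := by
  set A := Icc (exp (-2 * T)) (exp (-T))
  have hpt (x : E) : ‖fderiv ℝ (logCutoff T) x‖ ^ 2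
      ≤ (M / T) ^ 2 * A.indicator (fun s => (s ^ 2)⁻¹) ‖x‖ := by
    by_cases hx : ‖x‖ ∈ A
    · have hx0 : 0 < ‖x‖ := (exp_pos _).trans_le hx.1
      rw [indicator_of_mem hx]
      calc _ ≤ (M / (T * ‖x‖)) ^ 2 :=
            pow_le_pow_left₀ (norm_nonneg _) (norm_fderiv_logCutoff_le hT hM hx) 2
        _ = _ := by field_simp
    · simp [fderiv_logCutoff_eq_zero hT hx, indicator_of_notMem hx]
  calc _ ≤ ∫ x, (M / T) ^ 2 * A.indicator (fun s => (s ^ 2)⁻¹) ‖x‖ ∂μ :=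
        integral_mono_of_nonneg (ae_of_all _ fun _ => by positivity)
          ((integrable_indicator_Icc_inv_sq_norm μ (exp_pos _)).const_mul _) (ae_of_all _ hpt)
    _ = (M / T) ^ 2 * ∫ x, A.indicator (fun s => (s ^ 2)⁻¹) ‖x‖ ∂μ := integral_const_mul _ _
    _ ≤ (M / T) ^ 2 * (finrank ℝ E * μ.real (ball 0 1) * log (exp (-T) / exp (-2 * T))) := by
        gcongr
        exact integral_indicator_Icc_inv_sq_norm_le μ hE (exp_pos _)
          (exp_le_exp.2 (by linarith)) (exp_le_one_iff.2 (by linarith))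
    _ = _ := by
        rw [← exp_sub, log_exp]
        field_simp
        ring

end Capacity

section Density

variable {E F : Type*} [NormedAddCommGroup E] [NormedAddCommGroup F] [NormedSpace ℝ F]

/-- Comparable, up to a factor `√2`, to the `H¹` distance. -/
noncomputable def h1Dist [NormedSpace ℝ E] [MeasurableSpace E] (μ : Measure E) (u v : E → F) : ℝ :=
  √(∫ x, ‖u x - v x‖ ^ 2 ∂μ) + √(∫ x, ‖fderiv ℝ u x - fderiv ℝ v x‖ ^ 2 ∂μ)

variable [InnerProductSpace ℝ E] [FiniteDimensional ℝ E] [MeasurableSpace E] [BorelSpace E]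
  (μ : Measure E) [μ.IsAddHaarMeasure]

theorem tendsto_measureReal_closedBall_exp_neg [Nontrivial E] :
    Tendsto (fun T => μ.real (closedBall (0 : E) (exp (-T)))) atTop (𝓝 0) := by
  have hd : finrank ℝ E ≠ 0 := finrank_pos.ne'
  simpa [Measure.addHaar_real_closedBall' μ _ (exp_pos _).le, hd] using
    (tendsto_exp_neg_atTop_nhds_zero.pow (finrank ℝ E)).mul_const (μ.real (closedBall (0 : E) 1))

theorem tendsto_h1Dist_logCutoff_smul (hE : 2 ≤ finrank ℝ E) {u : E → F} (hu : ContDiff ℝ 1 u)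
    (hsupp : HasCompactSupport u) :
    Tendsto (fun T => h1Dist μ u fun x => logCutoff T x • u x) atTop (𝓝 0) := by
  have : Nontrivial E := Module.nontrivial_of_finrank_pos (R := ℝ) (by omega)
  obtain ⟨M, hM⟩ := smoothTransition.exists_norm_deriv_le
  obtain ⟨Cu, hCu⟩ := hsupp.exists_bound_of_continuous hu.continuous
  obtain ⟨Cd, hCd⟩ :=
    (hsupp.fderiv (𝕜 := ℝ)).exists_bound_of_continuous (hu.continuous_fderiv one_ne_zero)
  have hV := tendsto_measureReal_closedBall_exp_neg μ (E := E)
  set V := fun T => μ.real (closedBall (0 : E) (exp (-T)))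
  set K := finrank ℝ E * μ.real (ball (0 : E) 1) * M ^ 2
  have hbound : ∀ T > 0, h1Dist μ u (fun x => logCutoff T x • u x)
      ≤ √(V T * Cu ^ 2) + √(2 * (V T * Cd ^ 2) + 2 * Cu ^ 2 * (K / T)) := by
    intro T hT
    have hψ1 : ∀ x ∉ closedBall (0 : E) (exp (-T)), logCutoff T x = 1 := fun x hx =>
      logCutoff_eq_one hT (le_of_lt (by simpa using hx))
    have hψd : Differentiable ℝ (logCutoff (E := E) T) :=
      (contDiff_logCutoff hT).differentiable (by simp)
    unfold h1Dist
    gcongr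
    · exact integral_norm_sub_smul_sq_le (logCutoff_mem_Icc T) hψ1 measurableSet_closedBall
        measure_closedBall_lt_top.ne hCu
    · calc _ ≤ 2 * (V T * Cd ^ 2) + 2 * Cu ^ 2 * ∫ x, ‖fderiv ℝ (logCutoff T) x‖ ^ 2 ∂μ :=
            integral_norm_fderiv_sub_fderiv_smul_sq_le (logCutoff_mem_Icc T) hψ1
              measurableSet_closedBall measure_closedBall_lt_top.ne hCu hψd
              (hu.differentiable one_ne_zero) hCd (integrable_norm_fderiv_logCutoff_sq μ hT)
        _ ≤ _ := by
            gcongr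
            exact integral_norm_fderiv_logCutoff_sq_le μ hE hT hM
  have hlim : Tendsto (fun T => √(V T * Cu ^ 2) + √(2 * (V T * Cd ^ 2) + 2 * Cu ^ 2 * (K / T)))
      atTop (𝓝 0) := by
    have := ((hV.mul_const (Cu ^ 2)).sqrt).add ((((hV.mul_const (Cd ^ 2)).const_mul 2).add
      (((tendsto_const_nhds (x := K)).div_atTop tendsto_id).const_mul (2 * Cu ^ 2))).sqrt)
    simpa only [zero_mul, mul_zero, add_zero, Real.sqrt_zero, id] using this
  exact tendsto_of_tendsto_of_tendsto_of_le_of_le' tendsto_const_nhds hlim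
    (Eventually.of_forall fun T => by unfold h1Dist; positivity)
    ((eventually_gt_atTop 0).mono hbound)

end Density

/-- **Density of smooth functions vanishing near the origin.**
For `n ≥ 2`, the set of smooth compactly supported functions on `ℝⁿ` which vanish on a
neighbourhood of the origin is dense in the smooth compactly supported functions with respect
to the `H¹`-norm. -/
theorem dense_vanishing_near_origin_H1
    (n : ℕ) (hn : 2 ≤ n)
    (u : EuclideanSpace ℝ (Fin n) → ℂ)
    (hu_smooth : ContDiff ℝ (⊤ : ℕ∞) u)
    (hu_supp : HasCompactSupport u)
    (δ : ℝ) (hδ : 0 < δ) :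
    ∃ v : EuclideanSpace ℝ (Fin n) → ℂ,
      ContDiff ℝ (⊤ : ℕ∞) v ∧ HasCompactSupport v ∧
      (∃ U : Set (EuclideanSpace ℝ (Fin n)), IsOpen U ∧ (0 : EuclideanSpace ℝ (Fin n)) ∈ U ∧
        ∀ x ∈ U, v x = 0) ∧
      Real.sqrt (∫ x, ‖u x - v x‖ ^ 2) +
        Real.sqrt (∫ x, ‖fderiv ℝ u x - fderiv ℝ v x‖ ^ 2) < δ := by
  have hE : 2 ≤ finrank ℝ (EuclideanSpace ℝ (Fin n)) := by simpa using hn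
  obtain ⟨T, hTδ, hT⟩ := ((tendsto_h1Dist_logCutoff_smul volume hE (hu_smooth.of_le (by simp))
    hu_supp).eventually (gt_mem_nhds hδ)).and (eventually_gt_atTop 0) |>.exists
  refine ⟨fun x => logCutoff T x • u x, (contDiff_logCutoff hT).smul hu_smooth,
    hu_supp.smul_left (f := logCutoff T), ⟨ball 0 (exp (-2 * T)), isOpen_ball,
    mem_ball_self (exp_pos _), fun x hx => ?_⟩, hTδ⟩
  simp [logCutoff_eq_zero hT (mem_ball_zero_iff.1 hx).le]
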